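/- Let A be a symmetric δ-Leibniz admissible algebra over ℂ, i.e., the bracket [x,y]_δ := x*y − δ*(y*x) makes (A, [·,·]_δ) a symmetric δ-Leibniz algebra. Write x² := x*x and x³ := x²*x. Then: (A) if δ ∉ {1, −1, 1/2}, then x²*x = 0, x*x² = 0 and x²*x² = 0 for all x ∈ A (so A is a nilalgebra with nilindex 3); (B) if δ = 1/2, then x²*x = x*x², x²*x² = x³*x and x²*x² = x*x³ for all x ∈ A (hence, by Albert's criterion, A is power-associative). -/

import Mathlib

/-!
With `a = x²x` and `b = xx²`, the right and left δ-Leibniz identities at `(x, x, x)` give, after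
dividing by `1 - δ`, the system `p a = q b`, `p b = q a` with `p = 1 - δ + δ²`, `q = 2δ - δ²`.
Its determinant `p² - q² = (1 - δ)(1 + δ)(1 - 2δ)` vanishes exactly at the excluded values,
so otherwise `a = b = 0`, and then the left identity at `(x², x, x)` kills `x²x²`.
At `δ = 1/2` we have `p = q`, hence only `a = b`; the two identities at `(x², x, x)` then give
two independent linear relations between `x²x²`, `(x²x)x` and `x(x²x)`, which force all three
to coincide.
-/

/-- The δ-commutator [x,y]_δ := x*y − δ•(y*x) of a (non-associative)
ℂ-algebra. -/
def deltaComm {A : Type*} [AddCommGroup A] [Module ℂ A]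
    (mul : A →ₗ[ℂ] A →ₗ[ℂ] A) (δ : ℂ) (x y : A) : A :=
  mul x y - δ • mul y x

lemma eq_zero_of_smul_sub_smul_eq_zero {K M : Type*} [Field K] [AddCommGroup M] [Module K M]
    {p q : K} {a b : M} (hpq : p ^ 2 ≠ q ^ 2)
    (hab : p • a - q • b = 0) (hba : p • b - q • a = 0) : a = 0 := by
  have h : (p ^ 2 - q ^ 2) • a = 0 := by
    linear_combination (norm := module) p • hab + q • hba
  exact (smul_eq_zero.mp h).resolve_left (sub_ne_zero.mpr hpq)

section

variable {A : Type*} [AddCommGroup A] [Module ℂ A] (mul : A →ₗ[ℂ] A →ₗ[ℂ] A) (δ : ℂ)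

def IsRightDeltaLeibniz : Prop :=
  ∀ x y z : A, deltaComm mul δ (deltaComm mul δ x y) z
    = δ • (deltaComm mul δ (deltaComm mul δ x z) y + deltaComm mul δ x (deltaComm mul δ y z))

def IsLeftDeltaLeibniz : Prop :=
  ∀ x y z : A, deltaComm mul δ x (deltaComm mul δ y z)
    = δ • (deltaComm mul δ (deltaComm mul δ x y) z + deltaComm mul δ y (deltaComm mul δ x z))

variable {mul δ}

lemma IsRightDeltaLeibniz.cube (h : IsRightDeltaLeibniz mul δ) (x : A) :
    (1 - δ) • ((1 - δ + δ ^ 2) • mul (mul x x) x - (2 * δ - δ ^ 2) • mul x (mul x x)) = 0 := by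
  have e := h x x x
  simp only [deltaComm, map_sub, map_smul, LinearMap.sub_apply, LinearMap.smul_apply] at e
  linear_combination (norm := module) e

lemma IsLeftDeltaLeibniz.cube (h : IsLeftDeltaLeibniz mul δ) (x : A) :
    (1 - δ) • ((1 - δ + δ ^ 2) • mul x (mul x x) - (2 * δ - δ ^ 2) • mul (mul x x) x) = 0 := by
  have e := h x x x
  simp only [deltaComm, map_sub, map_smul, LinearMap.sub_apply, LinearMap.smul_apply] at e
  linear_combination (norm := module) e

lemma IsLeftDeltaLeibniz.sq_mul_sq (h : IsLeftDeltaLeibniz mul δ) {x : A}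
    (hx : mul (mul x x) x = δ • mul x (mul x x)) :
    (1 - δ) ^ 2 • mul (mul x x) (mul x x) = 0 := by
  have e := h (mul x x) x x
  have hcomm : deltaComm mul δ (mul x x) x = 0 := sub_eq_zero.mpr hx
  rw [hcomm] at e
  simp only [deltaComm, map_sub, map_smul, map_zero, LinearMap.sub_apply,
    LinearMap.smul_apply, LinearMap.zero_apply] at e
  linear_combination (norm := module) e

lemma symmetricDeltaLeibniz_cube_eq_zero
    (hr : IsRightDeltaLeibniz mul δ) (hl : IsLeftDeltaLeibniz mul δ)
    (h1 : δ ≠ 1) (hm1 : δ ≠ -1) (hh : δ ≠ 1 / 2) (x : A) :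
    mul (mul x x) x = 0 ∧ mul x (mul x x) = 0 := by
  have hδ : 1 - δ ≠ 0 := sub_ne_zero.mpr (Ne.symm h1)
  have hpq : (1 - δ + δ ^ 2) ^ 2 ≠ (2 * δ - δ ^ 2) ^ 2 := by
    rw [Ne, ← sub_eq_zero, show (1 - δ + δ ^ 2) ^ 2 - (2 * δ - δ ^ 2) ^ 2
      = (1 - δ) * ((1 + δ) * (1 - 2 * δ)) by ring]
    refine mul_ne_zero hδ (mul_ne_zero (fun h => hm1 ?_) (fun h => hh ?_))
    · linear_combination h
    · linear_combination -h / 2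
  have er := (smul_eq_zero.mp (hr.cube x)).resolve_left hδ
  have el := (smul_eq_zero.mp (hl.cube x)).resolve_left hδ
  exact ⟨eq_zero_of_smul_sub_smul_eq_zero hpq er el, eq_zero_of_smul_sub_smul_eq_zero hpq el er⟩

lemma IsRightDeltaLeibniz.cube_comm_of_half (h : IsRightDeltaLeibniz mul (1 / 2)) (x : A) :
    mul (mul x x) x = mul x (mul x x) := by
  linear_combination (norm := module) (8 / 3 : ℂ) • h.cube x

lemma IsLeftDeltaLeibniz.sq_mul_sq_of_half (h : IsLeftDeltaLeibniz mul (1 / 2)) {x : A}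
    (hx : mul (mul x x) x = mul x (mul x x)) :
    (2 : ℂ) • mul (mul x x) (mul x x) = mul (mul (mul x x) x) x + mul x (mul (mul x x) x) := by
  have e := h (mul x x) x x
  simp only [deltaComm] at e
  rw [← hx] at e
  simp only [map_sub, map_smul, LinearMap.sub_apply, LinearMap.smul_apply] at e
  linear_combination (norm := module) (8 : ℂ) • e

lemma IsRightDeltaLeibniz.sq_mul_sq_of_half (h : IsRightDeltaLeibniz mul (1 / 2)) {x : A}
    (hx : mul (mul x x) x = mul x (mul x x)) :
    mul (mul x x) (mul x x) = (2 : ℂ) • mul (mul (mul x x) x) x - mul x (mul (mul x x) x) := by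
  have e := h (mul x x) x x
  simp only [deltaComm] at e
  rw [← hx] at e
  simp only [map_sub, map_smul, LinearMap.sub_apply, LinearMap.smul_apply] at e
  linear_combination (norm := module) (-8 : ℂ) • e

end

/-- Let A be a symmetric δ-Leibniz admissible algebra over ℂ,
i.e., the δ-commutator makes A a symmetric δ-Leibniz algebra. With x² := x*x
and x³ := x²*x:
(A) if δ ∉ {1, −1, 1/2}, then x²*x = 0, x*x² = 0 and x²*x² = 0 (A is a
nilalgebra with nilindex 3);
(B) if δ = 1/2, then x²*x = x*x², x²*x² = x³*x and x²*x² = x*x³ (so A is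
power-associative by Albert's criterion). -/
theorem symmetric_deltaLeibniz_admissible_nil_or_powerAssociative
    (A : Type*) [AddCommGroup A] [Module ℂ A]
    (mul : A →ₗ[ℂ] A →ₗ[ℂ] A) (δ : ℂ)
    (rightL : ∀ x y z : A,
      deltaComm mul δ (deltaComm mul δ x y) z
        = δ • (deltaComm mul δ (deltaComm mul δ x z) y
             + deltaComm mul δ x (deltaComm mul δ y z)))
    (leftL : ∀ x y z : A,
      deltaComm mul δ x (deltaComm mul δ y z)
        = δ • (deltaComm mul δ (deltaComm mul δ x y) z
             + deltaComm mul δ y (deltaComm mul δ x z))) :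
    (δ ≠ 1 → δ ≠ -1 → δ ≠ 1/2 → ∀ x : A,
        mul (mul x x) x = 0 ∧ mul x (mul x x) = 0 ∧
        mul (mul x x) (mul x x) = 0) ∧
    (δ = 1/2 → ∀ x : A,
        mul (mul x x) x = mul x (mul x x) ∧
        mul (mul x x) (mul x x) = mul (mul (mul x x) x) x ∧
        mul (mul x x) (mul x x) = mul x (mul (mul x x) x)) := by
  have hr : IsRightDeltaLeibniz mul δ := rightL
  have hl : IsLeftDeltaLeibniz mul δ := leftL
  refine ⟨fun h1 hm1 hh x => ?_, fun hδ x => ?_⟩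
  · obtain ⟨ha, hb⟩ := symmetricDeltaLeibniz_cube_eq_zero hr hl h1 hm1 hh x
    have hsq := hl.sq_mul_sq (x := x) (by rw [ha, hb, smul_zero])
    have hδ : (1 - δ) ^ 2 ≠ 0 := pow_ne_zero 2 (sub_ne_zero.mpr (Ne.symm h1))
    exact ⟨ha, hb, (smul_eq_zero.mp hsq).resolve_left hδ⟩
  · subst hδ
    have hab := hr.cube_comm_of_half x
    have el := hl.sq_mul_sq_of_half hab
    have er := hr.sq_mul_sq_of_half hab
    refine ⟨hab, ?_, ?_⟩
    · linear_combination (norm := module) (1 / 3 : ℂ) • el + (1 / 3 : ℂ) • er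
    · linear_combination (norm := module) (2 / 3 : ℂ) • el - (1 / 3 : ℂ) • er
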